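/- The limit of the discrete Bernoulli survival products converges to the exponential survival function: if λ : [t, τ] → ℝ is continuous and nonnegative, then for partitions t = t₀ < ⋯ < t_K = τ with mesh tending to 0, ∏_{k=1}^K (1 − λ(t_{k-1})(t_k − t_{k-1})) → exp(−∫_t^τ λ(s) ds). -/

import Mathlib

/-!
Write `u_k = λ(t_{k-1}) (t_k - t_{k-1})`. Once `max u_k ≤ 1/2`, the product is
`exp (∑ log (1 - u_k))`, and `|log (1 - u) + u| ≤ 2u²` puts this exponent within
`2 (max u_k) ∑ u_k = O(mesh)` of `-∑ u_k`. In turn `∑ u_k` is a left Riemann sum of `λ`, within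
`ω(mesh) (τ - t)` of `∫ λ`, where `ω` is the modulus of uniform continuity of `λ` on `[t, τ]`.
Both exponents are `≤ 0`, where `exp` is 1-Lipschitz, so the two errors carry over to the
exponentials.
-/

open Real Set Finset Filter Topology

namespace Real

theorem abs_exp_sub_exp_le_of_nonpos {a b : ℝ} (ha : a ≤ 0) (hb : b ≤ 0) :
    |exp a - exp b| ≤ |a - b| := by
  wlog hab : a ≤ b generalizing a b
  · rw [abs_sub_comm, abs_sub_comm a]
    exact this hb ha (le_of_not_ge hab)
  have hexp : exp b - exp a = exp b * (1 - exp (a - b)) := by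
    rw [mul_sub, ← exp_add]; ring_nf
  have h1 : 1 - exp (a - b) ≤ b - a := by linarith [add_one_le_exp (a - b)]
  have h2 : 0 ≤ 1 - exp (a - b) := by linarith [exp_le_one_iff.2 (sub_nonpos.2 hab)]
  rw [abs_sub_comm, abs_of_nonneg (sub_nonneg.2 (exp_le_exp.2 hab)), abs_sub_comm,
    abs_of_nonneg (sub_nonneg.2 hab), hexp]
  calc exp b * (1 - exp (a - b)) ≤ 1 * (b - a) :=
        mul_le_mul (exp_le_one_iff.2 hb) h1 h2 zero_le_one
    _ = b - a := one_mul _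

theorem abs_log_one_sub_add_le {x : ℝ} (hx : |x| ≤ 1 / 2) :
    |log (1 - x) + x| ≤ 2 * x ^ 2 := by
  have h := abs_log_sub_add_sum_range_le (hx.trans_lt (by norm_num)) 1
  simp only [Finset.sum_range_one, pow_one, Nat.cast_zero, zero_add, div_one,
    one_add_one_eq_two] at h
  rw [add_comm]
  refine h.trans ?_
  rw [div_le_iff₀ (by linarith), sq_abs]
  nlinarith [sq_nonneg x]

end Real

theorem Finset.abs_prod_one_sub_sub_exp_neg_sum_le {ι : Type*} (s : Finset ι) {u : ι → ℝ}
    {c : ℝ} (hu0 : ∀ i ∈ s, 0 ≤ u i) (huc : ∀ i ∈ s, u i ≤ c) (hc : c ≤ 1 / 2) :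
    |∏ i ∈ s, (1 - u i) - exp (-∑ i ∈ s, u i)| ≤ 2 * c * ∑ i ∈ s, u i := by
  have hprod : ∏ i ∈ s, (1 - u i) = exp (∑ i ∈ s, log (1 - u i)) := by
    rw [exp_sum]
    exact prod_congr rfl fun i hi => (exp_log (by linarith [huc i hi])).symm
  have hlog : ∑ i ∈ s, log (1 - u i) ≤ 0 :=
    sum_nonpos fun i hi => log_nonpos (by linarith [huc i hi]) (by linarith [hu0 i hi])
  rw [hprod]
  calc |exp (∑ i ∈ s, log (1 - u i)) - exp (-∑ i ∈ s, u i)|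
      ≤ |∑ i ∈ s, log (1 - u i) - -∑ i ∈ s, u i| :=
        abs_exp_sub_exp_le_of_nonpos hlog (neg_nonpos.2 (sum_nonneg hu0))
    _ = |∑ i ∈ s, (log (1 - u i) + u i)| := by rw [sub_neg_eq_add, sum_add_distrib]
    _ ≤ ∑ i ∈ s, |log (1 - u i) + u i| := abs_sum_le_sum_abs _ _
    _ ≤ ∑ i ∈ s, 2 * u i ^ 2 := sum_le_sum fun i hi =>
        abs_log_one_sub_add_le (by rw [abs_of_nonneg (hu0 i hi)]; linarith [huc i hi])
    _ ≤ ∑ i ∈ s, 2 * c * u i := sum_le_sum fun i hi => by nlinarith [hu0 i hi, huc i hi]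
    _ = 2 * c * ∑ i ∈ s, u i := (mul_sum _ _ _).symm

section Partition

variable {K : ℕ}

theorem Fin.sum_succ_sub_castSucc {G : Type*} [AddCommGroup G] (p : Fin (K + 1) → G) :
    ∑ k : Fin K, (p k.succ - p k.castSucc) = p (Fin.last K) - p 0 := by
  induction K with
  | zero => simp
  | succ K ih =>
    have h := ih (p ∘ Fin.castSucc)
    simp only [Function.comp_apply, Fin.castSucc_zero] at h
    rw [Fin.sum_univ_castSucc]
    simp only [Fin.succ_castSucc]
    rw [h, Fin.succ_last]
    abel

theorem intervalIntegral.sum_integral_partition {E : Type*} [NormedAddCommGroup E]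
    [NormedSpace ℝ E] {f : ℝ → E} {μ : MeasureTheory.Measure ℝ} (p : Fin (K + 1) → ℝ)
    (hf : ∀ i j, IntervalIntegrable f μ (p i) (p j)) :
    ∑ k : Fin K, ∫ x in p k.castSucc..p k.succ, f x ∂μ = ∫ x in p 0..p (Fin.last K), f x ∂μ := by
  induction K with
  | zero => simp
  | succ K ih =>
    have h := ih (p ∘ Fin.castSucc) fun i j => hf _ _
    simp only [Function.comp_apply, Fin.castSucc_zero] at h
    rw [Fin.sum_univ_castSucc]
    simp only [Fin.succ_castSucc]
    rw [h, Fin.succ_last, integral_add_adjacent_intervals (hf _ _) (hf _ _)]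

theorem Monotone.apply_mem_Icc_zero_last {p : Fin (K + 1) → ℝ} (hp : Monotone p)
    (i : Fin (K + 1)) : p i ∈ Icc (p 0) (p (Fin.last K)) :=
  ⟨hp (Fin.zero_le i), hp (Fin.le_last i)⟩

theorem abs_sum_mul_sub_integral_le {f : ℝ → ℝ} {p : Fin (K + 1) → ℝ} {η : ℝ}
    (hp : Monotone p) (hf : ContinuousOn f (Icc (p 0) (p (Fin.last K))))
    (hosc : ∀ k : Fin K, ∀ x ∈ Icc (p k.castSucc) (p k.succ), |f (p k.castSucc) - f x| ≤ η) :
    |∑ k : Fin K, f (p k.castSucc) * (p k.succ - p k.castSucc) -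
        ∫ x in p 0..p (Fin.last K), f x| ≤ η * (p (Fin.last K) - p 0) := by
  have hint : ∀ i j, IntervalIntegrable f MeasureTheory.volume (p i) (p j) := fun i j =>
    (hf.mono (uIcc_subset_Icc (hp.apply_mem_Icc_zero_last i)
      (hp.apply_mem_Icc_zero_last j))).intervalIntegrable
  rw [← intervalIntegral.sum_integral_partition p hint, ← sum_sub_distrib,
    ← Fin.sum_succ_sub_castSucc p, mul_sum]
  refine (abs_sum_le_sum_abs _ _).trans (sum_le_sum fun k _ => ?_)
  have hle : p k.castSucc ≤ p k.succ := hp k.castSucc_le_succ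
  calc |f (p k.castSucc) * (p k.succ - p k.castSucc) - ∫ x in p k.castSucc..p k.succ, f x|
      = |∫ x in p k.castSucc..p k.succ, (f (p k.castSucc) - f x)| := by
        rw [intervalIntegral.integral_sub intervalIntegrable_const (hint _ _),
          intervalIntegral.integral_const, smul_eq_mul, mul_comm]
    _ ≤ η * |p k.succ - p k.castSucc| := by
        simpa only [Real.norm_eq_abs] using intervalIntegral.norm_integral_le_of_norm_le_const
          fun x hx => (Real.norm_eq_abs _).trans_le
            (hosc k x (Ioc_subset_Icc_self (uIoc_of_le hle ▸ hx)))
    _ = η * (p k.succ - p k.castSucc) := by rw [abs_of_nonneg (sub_nonneg.2 hle)]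

theorem abs_prod_one_sub_mul_sub_exp_neg_integral_le {f : ℝ → ℝ} {p : Fin (K + 1) → ℝ}
    {M δ η : ℝ} (hp : Monotone p) (hf : ContinuousOn f (Icc (p 0) (p (Fin.last K))))
    (hf0 : ∀ x ∈ Icc (p 0) (p (Fin.last K)), 0 ≤ f x)
    (hfM : ∀ x ∈ Icc (p 0) (p (Fin.last K)), f x ≤ M)
    (hδ : 0 ≤ δ) (hmesh : ∀ k : Fin K, p k.succ - p k.castSucc ≤ δ) (hMδ : M * δ ≤ 1 / 2)
    (hosc : ∀ k : Fin K, ∀ x ∈ Icc (p k.castSucc) (p k.succ), |f (p k.castSucc) - f x| ≤ η) :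
    |∏ k : Fin K, (1 - f (p k.castSucc) * (p k.succ - p k.castSucc)) -
        exp (-∫ x in p 0..p (Fin.last K), f x)| ≤ (2 * M ^ 2 * δ + η) * (p (Fin.last K) - p 0) := by
  set u : Fin K → ℝ := fun k => f (p k.castSucc) * (p k.succ - p k.castSucc)
  set I := ∫ x in p 0..p (Fin.last K), f x
  have hmem := hp.apply_mem_Icc_zero_last
  have hΔ : ∀ k : Fin K, 0 ≤ p k.succ - p k.castSucc := fun k =>
    sub_nonneg.2 (hp k.castSucc_le_succ)
  have hu0 : ∀ k, 0 ≤ u k := fun k => mul_nonneg (hf0 _ (hmem _)) (hΔ k)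
  have hM : 0 ≤ M := (hf0 _ (hmem 0)).trans (hfM _ (hmem 0))
  have huM : ∀ k, u k ≤ M * δ := fun k => mul_le_mul (hfM _ (hmem _)) (hmesh k) (hΔ k) hM
  have hsum : ∑ k, u k ≤ M * (p (Fin.last K) - p 0) := by
    rw [← Fin.sum_succ_sub_castSucc p, mul_sum]
    exact sum_le_sum fun k _ => mul_le_mul_of_nonneg_right (hfM _ (hmem _)) (hΔ k)
  have hI : 0 ≤ I := intervalIntegral.integral_nonneg (hp (Fin.zero_le _)) hf0
  calc |∏ k, (1 - u k) - exp (-I)|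
      ≤ |∏ k, (1 - u k) - exp (-∑ k, u k)| + |exp (-∑ k, u k) - exp (-I)| := abs_sub_le _ _ _
    _ ≤ 2 * (M * δ) * ∑ k, u k + |∑ k, u k - I| := by
        refine add_le_add
          (abs_prod_one_sub_sub_exp_neg_sum_le _ (fun k _ => hu0 k) (fun k _ => huM k) hMδ) ?_
        simpa only [neg_sub_neg, abs_sub_comm] using abs_exp_sub_exp_le_of_nonpos
          (neg_nonpos.2 (sum_nonneg fun k _ => hu0 k)) (neg_nonpos.2 hI)
    _ ≤ 2 * (M * δ) * (M * (p (Fin.last K) - p 0)) + η * (p (Fin.last K) - p 0) := by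
        refine add_le_add (mul_le_mul_of_nonneg_left hsum (by positivity))
          (abs_sum_mul_sub_integral_le hp hf hosc)
    _ = (2 * M ^ 2 * δ + η) * (p (Fin.last K) - p 0) := by ring

end Partition

/-- Convergence of the discrete Bernoulli survival products to the exponential survival
function: for continuous nonnegative `λ` on `[t, τ]`, over partitions
`t = t₀ < ⋯ < t_K = τ` with mesh tending to `0` (small enough that each factor is positive),
`∏_{k=1}^K (1 − λ(t_{k-1})·(t_k − t_{k-1})) → exp (−∫_t^τ λ)`. -/
theorem bernoulli_product_tendsto_exp_survival
    (t τ : ℝ) (htτ : t < τ) (lam : ℝ → ℝ)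
    (hlam : ContinuousOn lam (Set.Icc t τ))
    (hnonneg : ∀ s ∈ Set.Icc t τ, 0 ≤ lam s) :
    ∀ ε > 0, ∃ δ > 0, ∀ (K : ℕ) (p : Fin (K + 1) → ℝ),
      StrictMono p → p 0 = t → p (Fin.last K) = τ →
      (∀ k : Fin K, p k.succ - p k.castSucc < δ) →
      (∀ k : Fin K, 0 < 1 - lam (p k.castSucc) * (p k.succ - p k.castSucc)) →
      |(∏ k : Fin K, (1 - lam (p k.castSucc) * (p k.succ - p k.castSucc))) -
        Real.exp (-∫ s in t..τ, lam s)| < ε := by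
  intro ε hε
  have hlen : 0 < τ - t := sub_pos.2 htτ
  obtain ⟨M, hM⟩ := isCompact_Icc.bddAbove_image hlam
  set η := ε / (2 * (τ - t))
  obtain ⟨δ₀, hδ₀, hUC⟩ := Metric.uniformContinuousOn_iff.1
    (isCompact_Icc.uniformContinuousOn_of_continuous hlam) η (by positivity)
  have hsmall : ∀ᶠ δ in 𝓝 0, M * δ < 1 / 2 ∧ 2 * M ^ 2 * δ * (τ - t) < ε / 2 :=
    ((continuous_const_mul M).tendsto' 0 0 (mul_zero M) |>.eventually_lt_const (by norm_num)).and
      ((by fun_prop : Continuous fun δ => 2 * M ^ 2 * δ * (τ - t)).tendsto' 0 0 (by ring)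
        |>.eventually_lt_const (by positivity))
  obtain ⟨δ, ⟨hδ, hδδ₀⟩, hMδ, herr⟩ :=
    (Eventually.and (Ioc_mem_nhdsGT hδ₀) (hsmall.filter_mono nhdsWithin_le_nhds)).exists
  refine ⟨δ, hδ, fun K p hp hp0 hpK hmesh _ => ?_⟩
  subst hp0 hpK
  have hosc : ∀ k : Fin K, ∀ x ∈ Icc (p k.castSucc) (p k.succ),
      |lam (p k.castSucc) - lam x| ≤ η := fun k x hx => by
    have hcell := Icc_subset_Icc (hp.monotone.apply_mem_Icc_zero_last k.castSucc).1
      (hp.monotone.apply_mem_Icc_zero_last k.succ).2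
    refine (hUC _ (hcell (left_mem_Icc.2 (hx.1.trans hx.2))) x (hcell hx) ?_).le
    rw [Real.dist_eq, abs_of_nonpos (sub_nonpos.2 hx.1)]
    linarith [hmesh k, hx.2]
  calc _ ≤ (2 * M ^ 2 * δ + η) * (p (Fin.last K) - p 0) :=
        abs_prod_one_sub_mul_sub_exp_neg_integral_le hp.monotone hlam hnonneg
          (fun x hx => hM ⟨x, hx, rfl⟩) hδ.le (fun k => (hmesh k).le) hMδ.le hosc
    _ = 2 * M ^ 2 * δ * (p (Fin.last K) - p 0) + ε / 2 := by simp only [η]; field_simp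
    _ < ε := by linarith
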